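/- Let ρ and σ be density operators on A, each held with probability 1/2, and consider distinguishing them by a two-outcome POVM {M_ρ, M_σ} with 0 ≤ M_ρ ≤ I and M_σ = I − M_ρ. The optimal success probability, (1/2)tr[M_ρ ρ] + (1/2)tr[M_σ σ] maximized over all such POVMs, equals 1/2 + (1/4)‖ρ − σ‖₁ (Helstrom's theorem). -/

import Mathlib

/-!
Write `Δ = ρ - σ`. The success probability of the POVM `{M, 1 - M}` is `1/2 + (1/2) re tr (M Δ)`.
Splitting `Δ = Δ⁺ - Δ⁻` with `Δ⁺, Δ⁻ ≥ 0`, positivity of traces of products of positive matrices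
gives `tr (M Δ) ≤ tr (M Δ⁺) ≤ tr Δ⁺` for `0 ≤ M ≤ 1`, with equality for the projection onto the
positive eigenspace of `Δ`. Finally `‖Δ‖₁ = tr |Δ| = 2 tr Δ⁺ - tr Δ = 2 tr Δ⁺` since `tr Δ = 0`.
-/

open Matrix Kronecker
open scoped ComplexOrder

noncomputable def traceNorm {n m : Type*} [Fintype n] [Fintype m] [DecidableEq m]
    (M : Matrix n m ℂ) : ℝ :=
  (((Matrix.posSemidef_conjTranspose_mul_self M).1.eigenvectorUnitary.1 *
      diagonal (((↑) : ℝ → ℂ) ∘ (√·) ∘ (Matrix.posSemidef_conjTranspose_mul_self M).1.eigenvalues) *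
      (star (Matrix.posSemidef_conjTranspose_mul_self M).1.eigenvectorUnitary : Matrix m m ℂ)).trace).re

noncomputable def ptraceFst {a b : Type*} [Fintype a]
    (M : Matrix (a × b) (a × b) ℂ) : Matrix b b ℂ :=
  Matrix.of fun i j => ∑ k, M (k, i) (k, j)

noncomputable def ptraceSnd {a b : Type*} [Fintype b]
    (M : Matrix (a × b) (a × b) ℂ) : Matrix a a ℂ :=
  Matrix.of fun i j => ∑ k, M (i, k) (j, k)

open scoped MatrixOrder

namespace Matrix

variable {n : Type*} [Fintype n] [DecidableEq n]

lemma PosSemidef.re_trace_mul_nonneg {A B : Matrix n n ℂ} (hA : A.PosSemidef) (hB : B.PosSemidef) :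
    0 ≤ (A * B).trace.re := by
  obtain ⟨C, rfl⟩ := CStarAlgebra.nonneg_iff_eq_star_mul_self.mp hA.nonneg
  rw [mul_assoc, trace_mul_comm]
  exact (Complex.nonneg_iff.mp (hB.mul_mul_conjTranspose_same C).trace_nonneg).1

lemma re_trace_mul_le_re_trace_posPart {M A : Matrix n n ℂ} (hM₀ : 0 ≤ M) (hM₁ : M ≤ 1)
    (hA : IsSelfAdjoint A) : (M * A).trace.re ≤ (A⁺).trace.re := by
  have hneg := (nonneg_iff_posSemidef.mp hM₀).re_trace_mul_nonneg
    (nonneg_iff_posSemidef.mp (CFC.negPart_nonneg A))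
  have hpos := (le_iff.mp hM₁).re_trace_mul_nonneg
    (nonneg_iff_posSemidef.mp (CFC.posPart_nonneg A))
  calc (M * A).trace.re = (M * A⁺).trace.re - (M * A⁻).trace.re := by
        rw [← Complex.sub_re, ← trace_sub, ← mul_sub, CFC.posPart_sub_negPart A]
    _ ≤ (M * A⁺).trace.re + ((1 - M) * A⁺).trace.re := by linarith
    _ = (A⁺).trace.re := by
        rw [← Complex.add_re, ← trace_add, ← add_mul, add_sub_cancel, one_mul]

lemma cfc_indicator_Ioi_mul_self {A : Matrix n n ℂ} (hA : IsSelfAdjoint A) :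
    cfc ((Set.Ioi (0 : ℝ)).indicator 1) A * A = A⁺ := by
  calc cfc ((Set.Ioi (0 : ℝ)).indicator 1) A * A
      = cfc ((Set.Ioi (0 : ℝ)).indicator 1) A * cfc id A := by rw [cfc_id ℝ A]
    _ = cfc (fun x => (Set.Ioi (0 : ℝ)).indicator 1 x * id x) A :=
        (cfc_mul _ _ A (A.finite_real_spectrum.continuousOn _)).symm
    _ = cfc (·⁺ : ℝ → ℝ) A := cfc_congr fun x _ => by
        by_cases hx : 0 < x
        · simp [hx, hx.le]
        · simp [hx, not_lt.mp hx]
    _ = A⁺ := by rw [CFC.posPart_def, cfcₙ_eq_cfc]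

theorem isGreatest_re_trace_mul_posPart {A : Matrix n n ℂ} (hA : IsSelfAdjoint A) :
    IsGreatest {x : ℝ | ∃ M : Matrix n n ℂ, 0 ≤ M ∧ M ≤ 1 ∧ x = (M * A).trace.re}
      (A⁺).trace.re := by
  refine ⟨⟨cfc ((Set.Ioi (0 : ℝ)).indicator 1) A, ?_, ?_,
    by rw [cfc_indicator_Ioi_mul_self hA]⟩, ?_⟩
  · exact cfc_nonneg fun x _ => Set.indicator_nonneg (fun _ _ => zero_le_one) x
  · exact cfc_le_one _ _ fun x _ => Set.indicator_le_self' (fun _ _ => zero_le_one) x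
  · rintro _ ⟨M, hM₀, hM₁, rfl⟩
    exact re_trace_mul_le_re_trace_posPart hM₀ hM₁ hA

end Matrix

lemma traceNorm_eq_re_trace_sqrt {n m : Type*} [Fintype n] [Fintype m] [DecidableEq m]
    (M : Matrix n m ℂ) : traceNorm M = (CFC.sqrt (Mᴴ * M)).trace.re := by
  have hM := posSemidef_conjTranspose_mul_self M
  rw [CFC.sqrt_eq_real_sqrt _ hM.nonneg, cfcₙ_eq_cfc, hM.1.cfc_eq]
  rfl

lemma traceNorm_eq_re_trace_abs {n : Type*} [Fintype n] [DecidableEq n] (A : Matrix n n ℂ) :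
    traceNorm A = (CFC.abs A).trace.re :=
  traceNorm_eq_re_trace_sqrt A

lemma traceNorm_eq_of_isSelfAdjoint {n : Type*} [Fintype n] [DecidableEq n] {A : Matrix n n ℂ}
    (hA : IsSelfAdjoint A) : traceNorm A = 2 * (A⁺).trace.re - A.trace.re := by
  rw [traceNorm_eq_re_trace_abs, eq_sub_iff_add_eq, ← Complex.add_re, ← trace_add,
    CFC.abs_add_self A, two_smul, trace_add, Complex.add_re]
  ring

/-- Helstrom's theorem: the optimal success probability of distinguishing `ρ` and `σ`
(each with prior 1/2) by a two-outcome POVM is `1/2 + (1/4)‖ρ − σ‖₁`. -/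
theorem helstrom
    {n : Type*} [Fintype n] [DecidableEq n]
    (ρ σ : Matrix n n ℂ)
    (hρ : ρ.PosSemidef) (hρ1 : ρ.trace = 1)
    (hσ : σ.PosSemidef) (hσ1 : σ.trace = 1) :
    IsGreatest { p : ℝ | ∃ Mρ : Matrix n n ℂ, Mρ.PosSemidef ∧ (1 - Mρ).PosSemidef ∧
        p = (1/2) * ((Mρ * ρ).trace).re + (1/2) * (((1 - Mρ) * σ).trace).re }
      (1/2 + (1/4) * traceNorm (ρ - σ)) := by
  have hΔ : IsSelfAdjoint (ρ - σ) := (hρ.1.sub hσ.1).isSelfAdjoint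
  have hsucc (M : Matrix n n ℂ) : 1/2 * (M * ρ).trace.re + 1/2 * ((1 - M) * σ).trace.re =
      1/2 + 1/2 * (M * (ρ - σ)).trace.re := by
    simp only [sub_mul, mul_sub, one_mul, trace_sub, hσ1, Complex.sub_re, Complex.one_re]
    ring
  have htn : traceNorm (ρ - σ) = 2 * ((ρ - σ)⁺).trace.re := by
    rw [traceNorm_eq_of_isSelfAdjoint hΔ, trace_sub, hρ1, hσ1, sub_self, Complex.zero_re, sub_zero]
  obtain ⟨⟨P, hP₀, hP₁, hP⟩, hmax⟩ := isGreatest_re_trace_mul_posPart hΔ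
  refine ⟨⟨P, nonneg_iff_posSemidef.mp hP₀, hP₁, ?_⟩, ?_⟩
  · rw [hsucc, htn, hP]
    ring
  · rintro _ ⟨M, hM₀, hM₁, rfl⟩
    have := hmax ⟨M, nonneg_iff_posSemidef.mpr hM₀, hM₁, rfl⟩
    rw [hsucc, htn]
    linarith
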